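/- Suppose in addition that p is odd. Then for every integer t ≥ 1, the degree-2(p^t − 1) homogeneous component of ξ̄^{−1} (the multiplicative inverse of ξ̄ in B̂) equals ξ_t. -/

import Mathlib

/-!
Put `g = T ξ̄ = ∑ₙ χ(ξₙ) T^(pⁿ)` and `f = ∑ₖ ξₖ T^(pᵏ)`. The left antipode relation, combined with
`χ(ξₙ^(pʲ)) = χ(ξₙ)^(pʲ)` (a consequence of the right one), says `f(g(T)) = T`. Dividing by `g`
gives `ξ̄⁻¹ = ∑ₖ ξₖ g^(pᵏ - 1)`, so the coefficient of `T^(pᵗ - 1)` in `ξ̄⁻¹` is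
`∑ₖ ξₖ [T^(pᵗ - 1)] g^(pᵏ - 1)`. Since `g^(pᵏ⁺¹ - 1) = (g^(pᵏ - 1))^p g^(p - 1)` in characteristic
`p` and `g` only involves the exponents `pⁿ`, every exponent occurring in `g^(pᵏ - 1)` has base-`p`
digit sum at most `(p - 1) k`, whereas `pᵗ - 1` has digit sum `(p - 1) t`. Hence only `k = t`
contributes, and `[T^(pᵗ - 1)] g^(pᵗ - 1) = χ(1)^(pᵗ - 1) = 1`.
-/

open TensorProduct

/-- `B = F_p[ξ_1, ξ_2, …]`; the variable `X (n-1)` of `MvPolynomial ℕ (ZMod p)` plays the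
role of `ξ_n`, and `ξ_0 = 1`. -/
noncomputable def milnorXi (p : ℕ) (n : ℕ) : MvPolynomial ℕ (ZMod p) :=
  if n = 0 then 1 else MvPolynomial.X (n - 1)

/-- The value `Δ(ξ_n) = Σ_{k=0}^{n} ξ_{n−k}^{p^k} ⊗ ξ_k` of the Milnor coproduct. -/
noncomputable def milnorCoprodVal (p n : ℕ) :
    MvPolynomial ℕ (ZMod p) ⊗[ZMod p] MvPolynomial ℕ (ZMod p) :=
  ∑ k ∈ Finset.range (n + 1),
    ((milnorXi p (n - k)) ^ (p ^ k)) ⊗ₜ[ZMod p] (milnorXi p k)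

/-- The element `ξ̄` of the completion `B̂ = ∏_m B_{2m}` (modelled as a power series with
coefficients in `B`, the degree-`2m` component being the coefficient of `T^m`): its
degree-`2(p^n − 1)` component is `χ(ξ_n)` and all other components vanish. -/
noncomputable def xiBar (p : ℕ)
    (χ : MvPolynomial ℕ (ZMod p) →ₗ[ZMod p] MvPolynomial ℕ (ZMod p)) :
    PowerSeries (MvPolynomial ℕ (ZMod p)) :=
  PowerSeries.mk fun m =>
    ∑ n ∈ Finset.range (m + 1), if p ^ n - 1 = m then χ (milnorXi p n) else 0

namespace Nat

variable {p : ℕ} [hp : Fact p.Prime]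

theorem digits_sum_add_le (a b : ℕ) :
    (p.digits (a + b)).sum ≤ (p.digits a).sum + (p.digits b).sum := by
  have hv : padicValNat p (a ! * b !) ≤ padicValNat p ((a + b) !) :=
    (padicValNat_dvd_iff_le (factorial_ne_zero _)).mp
      (pow_padicValNat_dvd.trans (factorial_mul_factorial_dvd_factorial_add a b))
  rw [padicValNat.mul (factorial_ne_zero a) (factorial_ne_zero b)] at hv
  have hmul := Nat.mul_le_mul_left (p - 1) hv
  rw [Nat.mul_add, sub_one_mul_padicValNat_factorial, sub_one_mul_padicValNat_factorial,
    sub_one_mul_padicValNat_factorial] at hmul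
  have := digit_sum_le p a
  have := digit_sum_le p b
  have := digit_sum_le p (a + b)
  omega

theorem digits_sum_base_pow (a : ℕ) : (p.digits (p ^ a)).sum = 1 := by
  simpa [digits_of_lt p 1 one_ne_zero hp.out.one_lt] using
    congrArg List.sum (digits_base_pow_mul (k := a) hp.out.one_lt Nat.one_pos)

theorem digits_sum_base_mul (n : ℕ) : (p.digits (p * n)).sum = (p.digits n).sum := by
  rcases n.eq_zero_or_pos with rfl | hn
  · simp
  · simpa using congrArg List.sum (digits_add p hp.out.one_lt 0 n hp.out.pos (Or.inr hn.ne'))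

theorem digits_sum_base_pow_sub_one (t : ℕ) : (p.digits (p ^ t - 1)).sum = (p - 1) * t := by
  have h1 := hp.out.one_lt
  induction t with
  | zero => simp
  | succ t ih =>
    have hpt : p ≤ p ^ (t + 1) := le_self_pow (succ_ne_zero t) p
    have hsplit : p ^ (t + 1) - 1 = (p - 1) + p * (p ^ t - 1) := by
      rw [Nat.mul_sub, mul_one, ← _root_.pow_succ' p t]
      omega
    rw [hsplit, digits_add p h1 _ _ (by omega) (Or.inl (by omega)), List.sum_cons, ih]
    ring

end Nat

namespace PowerSeries

variable {R : Type*} [CommRing R] {p : ℕ}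

theorem coeff_pow_expChar_pow [ExpChar R p] (f : R⟦X⟧) (k n : ℕ) :
    coeff n (f ^ p ^ k) = if p ^ k ∣ n then coeff (n / p ^ k) f ^ p ^ k else 0 := by
  have hp : p ≠ 0 := expChar_ne_zero R p
  rw [← MvPowerSeries.map_iterateFrobenius_expand p hp f k]
  change coeff n (map (iterateFrobenius R p k) (expand (p ^ k) (pow_ne_zero k hp) f)) = _
  rw [coeff_map, coeff_expand]
  split_ifs <;> simp [iterateFrobenius_def, hp]

theorem coeff_pow_pow_pow [Fact p.Prime] [ExpChar R p] (f : R⟦X⟧) (k N : ℕ) :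
    coeff (p ^ N) (f ^ p ^ k) = if k ≤ N then coeff (p ^ (N - k)) f ^ p ^ k else 0 := by
  have hp := (Fact.out : p.Prime)
  simp only [coeff_pow_expChar_pow, Nat.pow_dvd_pow_iff_le_right hp.one_lt]
  split_ifs with h
  · rw [Nat.pow_div h hp.pos]
  · rfl

def DigitSumLE (p w : ℕ) (f : R⟦X⟧) : Prop :=
  ∀ n, coeff n f ≠ 0 → (p.digits n).sum ≤ w

namespace DigitSumLE

variable {f g : R⟦X⟧} {v w : ℕ}

theorem one : DigitSumLE p 0 (1 : R⟦X⟧) := by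
  intro n hn
  rw [coeff_one] at hn
  simp [show n = 0 by by_contra h; simp [h] at hn]

variable [hp : Fact p.Prime]

theorem mul (hf : DigitSumLE p v f) (hg : DigitSumLE p w g) : DigitSumLE p (v + w) (f * g) := by
  intro n hn
  rw [coeff_mul] at hn
  obtain ⟨⟨i, j⟩, hij, hne⟩ := Finset.exists_ne_zero_of_sum_ne_zero hn
  rw [← Finset.HasAntidiagonal.mem_antidiagonal.mp hij]
  exact (Nat.digits_sum_add_le i j).trans
    (add_le_add (hf i (left_ne_zero_of_mul hne)) (hg j (right_ne_zero_of_mul hne)))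

theorem pow (hf : DigitSumLE p w f) (m : ℕ) : DigitSumLE p (m * w) (f ^ m) := by
  induction m with
  | zero => simpa using one
  | succ m ih => simpa [pow_succ, add_mul] using ih.mul hf

theorem pow_expChar [ExpChar R p] (hf : DigitSumLE p w f) : DigitSumLE p w (f ^ p) := by
  intro n hn
  rw [← pow_one p, coeff_pow_expChar_pow, pow_one] at hn
  split_ifs at hn with hdvd
  · obtain ⟨m, rfl⟩ := hdvd
    rw [Nat.mul_div_cancel_left m hp.out.pos] at hn
    rw [Nat.digits_sum_base_mul]
    exact hf m fun h => hn (by rw [h, zero_pow hp.out.ne_zero])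
  · exact absurd rfl hn

end DigitSumLE

def SupportedOnPowers (p : ℕ) (g : R⟦X⟧) : Prop :=
  ∀ n, coeff n g ≠ 0 → ∃ a, p ^ a = n

namespace SupportedOnPowers

variable [hp : Fact p.Prime] {g : R⟦X⟧}

theorem digitSumLE (hg : SupportedOnPowers p g) : DigitSumLE p 1 g := by
  intro n hn
  obtain ⟨a, rfl⟩ := hg n hn
  rw [Nat.digits_sum_base_pow]

theorem pow_expChar_pow [ExpChar R p] (hg : SupportedOnPowers p g) (k : ℕ) :
    SupportedOnPowers p (g ^ p ^ k) := by
  intro n hn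
  rw [coeff_pow_expChar_pow] at hn
  split_ifs at hn with hdvd
  · obtain ⟨m, rfl⟩ := hdvd
    rw [Nat.mul_div_cancel_left m (pow_pos hp.out.pos k)] at hn
    obtain ⟨a, rfl⟩ := hg m fun h => hn (by rw [h, zero_pow (pow_ne_zero k hp.out.ne_zero)])
    exact ⟨k + a, pow_add p k a⟩
  · exact absurd rfl hn

theorem coeff_pow_sub_one_pow_sub_one_eq_zero [ExpChar R p] (hg : SupportedOnPowers p g)
    {k t : ℕ} (hkt : k < t) : coeff (p ^ t - 1) (g ^ (p ^ k - 1)) = 0 := by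
  have h1 := hp.out.one_lt
  have hweight : ∀ k, DigitSumLE p ((p - 1) * k) (g ^ (p ^ k - 1)) := by
    intro k
    induction k with
    | zero => simpa using DigitSumLE.one
    | succ k ih =>
      have hexp : p ^ (k + 1) - 1 = (p ^ k - 1) * p + (p - 1) := by
        have : p ≤ p ^ (k + 1) := Nat.le_self_pow k.succ_ne_zero p
        rw [Nat.sub_one_mul, ← pow_succ]
        omega
      rw [hexp, pow_add, pow_mul, Nat.mul_succ]
      exact ih.pow_expChar.mul (by simpa using hg.digitSumLE.pow (p - 1))
  by_contra hne
  have := hweight k _ hne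
  rw [Nat.digits_sum_base_pow_sub_one] at this
  exact absurd this (not_le.mpr (Nat.mul_lt_mul_of_pos_left hkt (by omega)))

end SupportedOnPowers

theorem coeff_X_mul_pow_self (u : R⟦X⟧) (m : ℕ) :
    coeff m ((X * u) ^ m) = constantCoeff u ^ m := by
  rw [mul_pow, coeff_X_pow_mul', if_pos le_rfl, Nat.sub_self,
    coeff_zero_eq_constantCoeff_apply, map_pow]

section Inversion

variable [hp : Fact p.Prime] [ExpChar R p] {g : R⟦X⟧} {ξ : ℕ → R}

-- `hrel` compares the coefficients of `T^(pᴺ)` in `∑ₖ ξₖ g^(pᵏ)` and `T`; all others vanish anyway.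
theorem X_pow_dvd_sum_C_mul_pow_sub_X (hg : SupportedOnPowers p g)
    (hrel : ∀ N, ∑ k ∈ Finset.range (N + 1), ξ k * coeff (p ^ (N - k)) g ^ p ^ k =
      if N = 0 then 1 else 0) (t : ℕ) :
    X ^ (p ^ t + 1) ∣ ∑ k ∈ Finset.range (t + 1), C (ξ k) * g ^ p ^ k - X := by
  refine X_pow_dvd_iff.mpr fun m hm => ?_
  rw [map_sub, map_sum, sub_eq_zero, coeff_X]
  simp only [coeff_C_mul]
  by_cases hpow : ∃ N, p ^ N = m
  · obtain ⟨N, rfl⟩ := hpow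
    have hNt : N ≤ t := (Nat.pow_le_pow_iff_right hp.out.one_lt).mp (by omega)
    have hrange : (Finset.range (t + 1)).filter (· ≤ N) = Finset.range (N + 1) := by
      ext k
      simp only [Finset.mem_filter, Finset.mem_range]
      omega
    simp only [coeff_pow_pow_pow, mul_ite, mul_zero, ← Finset.sum_filter, hrange, hrel N,
      Nat.pow_eq_one, hp.out.one_lt.ne', false_or]
  · rw [if_neg fun h => hpow ⟨0, by rw [pow_zero, h]⟩]
    exact Finset.sum_eq_zero fun k _ => by
      rw [not_not.mp (mt (hg.pow_expChar_pow k m) hpow), mul_zero]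

theorem coeff_pow_sub_one_of_mul_eq_one (hg : SupportedOnPowers p g) (hg1 : coeff 1 g = 1)
    (hrel : ∀ N, ∑ k ∈ Finset.range (N + 1), ξ k * coeff (p ^ (N - k)) g ^ p ^ k =
      if N = 0 then 1 else 0) {u v : R⟦X⟧} (hu : X * u = g) (huv : u * v = 1) (t : ℕ) :
    coeff (p ^ t - 1) v = ξ t := by
  have hconst : constantCoeff u = 1 := by
    rw [← hg1, ← hu, ← coeff_zero_eq_constantCoeff_apply, ← coeff_succ_X_mul]
  have hgv : g * v = X := by rw [← hu, mul_assoc, huv, mul_one]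
  have hcancel : ∀ k, g ^ p ^ k * v = X * g ^ (p ^ k - 1) := by
    intro k
    conv_lhs => rw [← Nat.sub_add_cancel (Nat.one_le_pow k p hp.out.pos), pow_succ]
    rw [mul_assoc, hgv, mul_comm]
  have hvanish : ∀ k < t, coeff (p ^ t - 1) (C (ξ k) * g ^ (p ^ k - 1)) = 0 := fun k hk => by
    rw [coeff_C_mul, hg.coeff_pow_sub_one_pow_sub_one_eq_zero hk, mul_zero]
  obtain ⟨n, hn⟩ := Nat.exists_eq_add_one_of_ne_zero (pow_ne_zero t hp.out.ne_zero)
  rw [hn, Nat.add_sub_cancel] at hvanish ⊢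
  calc coeff n v = coeff (n + 1) (X * v) := (coeff_succ_X_mul n v).symm
    _ = coeff (n + 1) ((∑ k ∈ Finset.range (t + 1), C (ξ k) * g ^ p ^ k) * v) := by
        have := X_pow_dvd_iff.mp (dvd_mul_of_dvd_left (X_pow_dvd_sum_C_mul_pow_sub_X hg hrel t)
          v) (n + 1) (by omega)
        rw [sub_mul, map_sub, sub_eq_zero] at this
        exact this.symm
    _ = coeff n (∑ k ∈ Finset.range (t + 1), C (ξ k) * g ^ (p ^ k - 1)) := by
        simp only [Finset.sum_mul, mul_assoc, hcancel, mul_left_comm _ X, ← Finset.mul_sum,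
          coeff_succ_X_mul]
    _ = ξ t := by
        rw [map_sum, Finset.sum_range_succ, Finset.sum_eq_zero fun k hk => hvanish k
          (Finset.mem_range.mp hk), zero_add, coeff_C_mul, hn, Nat.add_sub_cancel, ← hu,
          coeff_X_mul_pow_self, hconst, one_pow, mul_one]

end Inversion

end PowerSeries

section Antipode

variable {K A : Type*} [CommRing K] [CommRing A] [Algebra K A]

def IsAntipode (Δ : A →ₐ[K] A ⊗[K] A) (ε : A →ₐ[K] K) (χ : A →ₗ[K] A) : Prop :=
  ∀ x : A, LinearMap.mul' K A (TensorProduct.map χ LinearMap.id (Δ x)) = algebraMap K A (ε x) ∧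
    LinearMap.mul' K A (TensorProduct.map LinearMap.id χ (Δ x)) = algebraMap K A (ε x)

theorem IsAntipode.map_one {Δ : A →ₐ[K] A ⊗[K] A} {ε : A →ₐ[K] K} {χ : A →ₗ[K] A}
    (hχ : IsAntipode Δ ε χ) : χ 1 = 1 := by
  simpa [Algebra.TensorProduct.one_def] using (hχ 1).2

end Antipode

theorem eq_of_forall_sum_range_mul_eq {R : Type*} [Ring R] {w : ℕ → ℕ → R} {a b : ℕ → R}
    (hw : ∀ n, w n n = 1)
    (h : ∀ n, ∑ k ∈ Finset.range (n + 1), w n k * a k = ∑ k ∈ Finset.range (n + 1), w n k * b k) :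
    a = b := by
  funext n
  induction n using Nat.strong_induction_on with
  | _ n ih =>
    have hn := h n
    rw [Finset.sum_range_succ, Finset.sum_range_succ,
      Finset.sum_congr rfl fun k hk => by rw [ih k (Finset.mem_range.mp hk)], hw, one_mul,
      one_mul] at hn
    exact add_left_cancel hn

section Milnor

open PowerSeries

variable {p : ℕ}
  {Δ : MvPolynomial ℕ (ZMod p) →ₐ[ZMod p]
    MvPolynomial ℕ (ZMod p) ⊗[ZMod p] MvPolynomial ℕ (ZMod p)}
  {ε : MvPolynomial ℕ (ZMod p) →ₐ[ZMod p] ZMod p}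
  {χ : MvPolynomial ℕ (ZMod p) →ₗ[ZMod p] MvPolynomial ℕ (ZMod p)}

@[simp]
theorem milnorXi_zero : milnorXi p 0 = 1 := rfl

theorem coeff_xiBar_eq_zero {m : ℕ} (hm : ∀ n, p ^ n - 1 ≠ m) : coeff m (xiBar p χ) = 0 := by
  rw [xiBar, coeff_mk]
  exact Finset.sum_eq_zero fun n _ => if_neg (hm n)

variable [hp : Fact p.Prime]

theorem sum_milnorXi_pow_mul_antipode_pow
    (hΔ : ∀ n, 1 ≤ n → Δ (milnorXi p n) = milnorCoprodVal p n)
    (hε : ∀ n, 1 ≤ n → ε (milnorXi p n) = 0) (hχ : IsAntipode Δ ε χ) (j : ℕ) {n : ℕ}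
    (hn : 1 ≤ n) :
    ∑ k ∈ Finset.range (n + 1),
      milnorXi p (n - k) ^ (p ^ k * p ^ j) * χ (milnorXi p k ^ p ^ j) = 0 := by
  have : CharP (MvPolynomial ℕ (ZMod p) ⊗[ZMod p] MvPolynomial ℕ (ZMod p)) p :=
    charP_of_injective_algebraMap (algebraMap (ZMod p) _).injective p
  have h := (hχ (milnorXi p n ^ p ^ j)).2
  rw [map_pow, hΔ n hn, milnorCoprodVal, sum_pow_char_pow, map_pow, hε n hn,
    zero_pow (pow_ne_zero _ hp.out.ne_zero), map_zero] at h
  simpa [Algebra.TensorProduct.tmul_pow, ← pow_mul] using h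

theorem sum_antipode_milnorXi_pow_mul
    (hΔ : ∀ n, 1 ≤ n → Δ (milnorXi p n) = milnorCoprodVal p n)
    (hε : ∀ n, 1 ≤ n → ε (milnorXi p n) = 0) (hχ : IsAntipode Δ ε χ) {n : ℕ} (hn : 1 ≤ n) :
    ∑ k ∈ Finset.range (n + 1), χ (milnorXi p (n - k) ^ p ^ k) * milnorXi p k = 0 := by
  have h := (hχ (milnorXi p n)).1
  rw [hΔ n hn, milnorCoprodVal, hε n hn, map_zero] at h
  simpa using h

/-- The right antipode relation for `ξₙ^(p^j)` and the `p^j`-th power of the one for `ξₙ` are the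
same triangular system, in the unknowns `χ(ξₖ^(p^j))` and `χ(ξₖ)^(p^j)` respectively. -/
theorem antipode_milnorXi_pow (hΔ : ∀ n, 1 ≤ n → Δ (milnorXi p n) = milnorCoprodVal p n)
    (hε : ∀ n, 1 ≤ n → ε (milnorXi p n) = 0) (hχ : IsAntipode Δ ε χ) (n j : ℕ) :
    χ (milnorXi p n ^ p ^ j) = χ (milnorXi p n) ^ p ^ j := by
  refine congrFun (eq_of_forall_sum_range_mul_eq
    (w := fun n k => milnorXi p (n - k) ^ (p ^ k * p ^ j))
    (a := fun k => χ (milnorXi p k ^ p ^ j)) (b := fun k => χ (milnorXi p k) ^ p ^ j)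
    (by simp) fun n => ?_) n
  rcases Nat.eq_zero_or_pos n with rfl | hn
  · simp [hχ.map_one]
  · rw [sum_milnorXi_pow_mul_antipode_pow hΔ hε hχ j hn]
    have h := congrArg (· ^ p ^ j) (sum_milnorXi_pow_mul_antipode_pow hΔ hε hχ 0 hn)
    simp only [pow_zero, mul_one, pow_one, sum_pow_char_pow, mul_pow, ← pow_mul,
      zero_pow (pow_ne_zero j hp.out.ne_zero)] at h
    exact h.symm

theorem coeff_pow_sub_one_xiBar (n : ℕ) :
    coeff (p ^ n - 1) (xiBar p χ) = χ (milnorXi p n) := by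
  have hinj : ∀ m, p ^ m - 1 = p ^ n - 1 → m = n := fun m hm =>
    Nat.pow_right_injective hp.out.two_le (by
      have := Nat.one_le_pow m p hp.out.pos
      have := Nat.one_le_pow n p hp.out.pos
      simp only
      omega)
  rw [xiBar, coeff_mk, Finset.sum_eq_single_of_mem n ?_ fun m _ hmn => if_neg (hmn ∘ hinj m),
    if_pos rfl]
  have := Nat.lt_pow_self (n := n) hp.out.one_lt
  exact Finset.mem_range.mpr (by omega)

theorem coeff_pow_X_mul_xiBar (n : ℕ) : coeff (p ^ n) (X * xiBar p χ) = χ (milnorXi p n) := by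
  obtain ⟨m, hm⟩ := Nat.exists_eq_add_one_of_ne_zero (pow_ne_zero n hp.out.ne_zero)
  rw [hm, coeff_succ_X_mul, ← coeff_pow_sub_one_xiBar, hm, Nat.add_sub_cancel]

theorem supportedOnPowers_X_mul_xiBar : SupportedOnPowers p (X * xiBar p χ) := by
  rintro (_ | m) hm
  · simp at hm
  · rw [coeff_succ_X_mul] at hm
    by_contra hpow
    refine hm (coeff_xiBar_eq_zero fun n hn => hpow ⟨n, ?_⟩)
    have := Nat.one_le_pow n p hp.out.pos
    omega

theorem sum_milnorXi_mul_coeff_X_mul_xiBar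
    (hΔ : ∀ n, 1 ≤ n → Δ (milnorXi p n) = milnorCoprodVal p n)
    (hε : ∀ n, 1 ≤ n → ε (milnorXi p n) = 0) (hχ : IsAntipode Δ ε χ) (N : ℕ) :
    ∑ k ∈ Finset.range (N + 1), milnorXi p k * coeff (p ^ (N - k)) (X * xiBar p χ) ^ p ^ k =
      if N = 0 then 1 else 0 := by
  simp only [coeff_pow_X_mul_xiBar, ← antipode_milnorXi_pow hΔ hε hχ]
  rcases N.eq_zero_or_pos with rfl | hN
  · simp [hχ.map_one]
  · rw [if_neg hN.ne', ← sum_antipode_milnorXi_pow_mul hΔ hε hχ hN]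
    exact Finset.sum_congr rfl fun _ _ => mul_comm _ _

end Milnor

theorem stmt_2_general (p : ℕ) [Fact p.Prime]
    (Δ : MvPolynomial ℕ (ZMod p) →ₐ[ZMod p]
      (MvPolynomial ℕ (ZMod p) ⊗[ZMod p] MvPolynomial ℕ (ZMod p)))
    (hΔ : ∀ n : ℕ, 1 ≤ n → Δ (milnorXi p n) = milnorCoprodVal p n)
    (ε : MvPolynomial ℕ (ZMod p) →ₐ[ZMod p] ZMod p)
    (hε : ∀ n : ℕ, 1 ≤ n → ε (milnorXi p n) = 0)
    (χ : MvPolynomial ℕ (ZMod p) →ₗ[ZMod p] MvPolynomial ℕ (ZMod p))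
    (hχ : ∀ x : MvPolynomial ℕ (ZMod p),
      (LinearMap.mul' (ZMod p) (MvPolynomial ℕ (ZMod p)))
          ((TensorProduct.map χ LinearMap.id) (Δ x)) =
        algebraMap (ZMod p) (MvPolynomial ℕ (ZMod p)) (ε x) ∧
      (LinearMap.mul' (ZMod p) (MvPolynomial ℕ (ZMod p)))
          ((TensorProduct.map LinearMap.id χ) (Δ x)) =
        algebraMap (ZMod p) (MvPolynomial ℕ (ZMod p)) (ε x))
    (u : (PowerSeries (MvPolynomial ℕ (ZMod p)))ˣ)
    (hu : (u : PowerSeries (MvPolynomial ℕ (ZMod p))) = xiBar p χ)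
    (t : ℕ) :
    PowerSeries.coeff (R := MvPolynomial ℕ (ZMod p)) (p ^ t - 1)
        ((u⁻¹ : (PowerSeries (MvPolynomial ℕ (ZMod p)))ˣ) :
          PowerSeries (MvPolynomial ℕ (ZMod p))) =
      milnorXi p t := by
  have hχ' : IsAntipode Δ ε χ := hχ
  exact PowerSeries.coeff_pow_sub_one_of_mul_eq_one supportedOnPowers_X_mul_xiBar
    ((coeff_pow_X_mul_xiBar 0).trans (by simp [hχ'.map_one]))
    (sum_milnorXi_mul_coeff_X_mul_xiBar hΔ hε hχ') (by rw [hu]) u.mul_inv t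

/-- For an odd prime `p`, the degree-`2(p^t − 1)` homogeneous component of `ξ̄^{−1}`
(the multiplicative inverse of `ξ̄` in `B̂`) equals `ξ_t`, for every `t ≥ 1`.
Here `Δ`, `ε` are the coproduct and counit of `B`, `χ` is its antipode, and `u` is `ξ̄`
regarded as a unit of `B̂`. -/
theorem stmt_2 (p : ℕ) [Fact p.Prime] (hodd : Odd p)
    (Δ : MvPolynomial ℕ (ZMod p) →ₐ[ZMod p]
      (MvPolynomial ℕ (ZMod p) ⊗[ZMod p] MvPolynomial ℕ (ZMod p)))
    (hΔ : ∀ n : ℕ, 1 ≤ n → Δ (milnorXi p n) = milnorCoprodVal p n)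
    (ε : MvPolynomial ℕ (ZMod p) →ₐ[ZMod p] ZMod p)
    (hε : ∀ n : ℕ, 1 ≤ n → ε (milnorXi p n) = 0)
    (χ : MvPolynomial ℕ (ZMod p) →ₗ[ZMod p] MvPolynomial ℕ (ZMod p))
    (hχ : ∀ x : MvPolynomial ℕ (ZMod p),
      (LinearMap.mul' (ZMod p) (MvPolynomial ℕ (ZMod p)))
          ((TensorProduct.map χ LinearMap.id) (Δ x)) =
        algebraMap (ZMod p) (MvPolynomial ℕ (ZMod p)) (ε x) ∧
      (LinearMap.mul' (ZMod p) (MvPolynomial ℕ (ZMod p)))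
          ((TensorProduct.map LinearMap.id χ) (Δ x)) =
        algebraMap (ZMod p) (MvPolynomial ℕ (ZMod p)) (ε x))
    (u : (PowerSeries (MvPolynomial ℕ (ZMod p)))ˣ)
    (hu : (u : PowerSeries (MvPolynomial ℕ (ZMod p))) = xiBar p χ)
    (t : ℕ) (ht : 1 ≤ t) :
    PowerSeries.coeff (R := MvPolynomial ℕ (ZMod p)) (p ^ t - 1)
        ((u⁻¹ : (PowerSeries (MvPolynomial ℕ (ZMod p)))ˣ) :
          PowerSeries (MvPolynomial ℕ (ZMod p))) =
      milnorXi p t :=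
  stmt_2_general p Δ hΔ ε hε χ hχ u hu t
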